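/- Let N ≥ 4 and define Δ_3 = min { 2N(N−1) − N² + ℓ_1² + ℓ_2² + ℓ_3² + ℓ_1(ℓ_3 − 1) } over all compositions (ℓ_1, ℓ_2, ℓ_3) of N into positive parts with ℓ_1 ≤ ℓ_2, and Δ_4 = min { 2N(N−1) − ℓ_1(ℓ_2 + 1) − ℓ_2(N − ℓ_2) − ℓ_3(ℓ_4 + 1) − ℓ_4(N − ℓ_4) } over all compositions (ℓ_1, ℓ_2, ℓ_3, ℓ_4) of N into positive parts with ℓ_1 ≤ ℓ_2 and ℓ_3 ≤ ℓ_4. Then for every R ∈ {1, …, N}, B̄*(R) ≥ min{Δ_3, Δ_4}. -/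

import Mathlib

open scoped Classical

/-- Membership in the class 𝓛 : first column zero, both entries of the
second column nonzero. -/
def matL {F : Type*} [Field F] (B : Matrix (Fin 2) (Fin 2) F) : Prop :=
  (∀ p, B p 0 = 0) ∧ (∀ p, B p 1 ≠ 0)

/-- Membership in the class 𝓡 : second column zero, both entries of the
first column nonzero. -/
def matR {F : Type*} [Field F] (B : Matrix (Fin 2) (Fin 2) F) : Prop :=
  (∀ p, B p 1 = 0) ∧ (∀ p, B p 0 ≠ 0)

/-- Partial sums `ℓ*_r = ℓ_1 + ⋯ + ℓ_r` of a tuple `ℓ` (0-indexed: the sum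
of the entries of index `< r`). -/
def psum {R : ℕ} (ℓ : Fin R → ℕ) (r : ℕ) : ℕ :=
  ∑ k ∈ Finset.univ.filter (fun k : Fin R => (k : ℕ) < r), ℓ k

/-- The defining conditions for membership of an `R × N` array of 2×2 blocks
in the class `H(R, R_L, ℓ)`:
(i) the blocks in row `r` and columns `ℓ*_{r-1} < i ≤ ℓ*_r` (1-indexed) are
invertible;
(ii) in the first `R_L` rows every block of `𝓛 ∪ 𝓡` lies in `𝓛`, and in the
remaining rows every block of `𝓛 ∪ 𝓡` lies in `𝓡`;
(iii) no two distinct rows among the first `R_L` have two common distinct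
columns with all four blocks in `𝓛`, and no two distinct rows among the
remaining ones have two common distinct columns with all four blocks in `𝓡`. -/
def memH {F : Type*} [Field F] (N R RL : ℕ) (ℓ : Fin R → ℕ)
    (H : Fin R → Fin N → Matrix (Fin 2) (Fin 2) F) : Prop :=
  (∀ (r : Fin R) (i : Fin N),
      psum ℓ (r : ℕ) ≤ (i : ℕ) → (i : ℕ) < psum ℓ ((r : ℕ) + 1) → IsUnit (H r i)) ∧
  (∀ (r : Fin R) (j : Fin N), (r : ℕ) < RL →
      (matL (H r j) ∨ matR (H r j)) → matL (H r j)) ∧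
  (∀ (r : Fin R) (j : Fin N), RL ≤ (r : ℕ) →
      (matL (H r j) ∨ matR (H r j)) → matR (H r j)) ∧
  (¬ ∃ (r₁ r₂ : Fin R) (i j : Fin N), r₁ ≠ r₂ ∧ i ≠ j ∧
      (r₁ : ℕ) < RL ∧ (r₂ : ℕ) < RL ∧
      matL (H r₁ i) ∧ matL (H r₂ i) ∧ matL (H r₁ j) ∧ matL (H r₂ j)) ∧
  (¬ ∃ (r₁ r₂ : Fin R) (i j : Fin N), r₁ ≠ r₂ ∧ i ≠ j ∧
      RL ≤ (r₁ : ℕ) ∧ RL ≤ (r₂ : ℕ) ∧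
      matR (H r₁ i) ∧ matR (H r₂ i) ∧ matR (H r₁ j) ∧ matR (H r₂ j))

/-- `|J_r(H̄)|`, the number of columns whose block in row `r` lies in `𝓛 ∪ 𝓡`. -/
noncomputable def Jcard {F : Type*} [Field F] {N R : ℕ}
    (H : Fin R → Fin N → Matrix (Fin 2) (Fin 2) F) (r : Fin R) : ℕ :=
  (Finset.univ.filter (fun j : Fin N => matL (H r j) ∨ matR (H r j))).card

/-- The bandwidth `B(H̄) = 2N(N-1) - Σ_r ℓ_r·|J_r(H̄)|` of a configuration. -/
noncomputable def BH {F : Type*} [Field F] {R : ℕ} (N : ℕ) (ℓ : Fin R → ℕ)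
    (H : Fin R → Fin N → Matrix (Fin 2) (Fin 2) F) : ℤ :=
  2 * (N : ℤ) * ((N : ℤ) - 1) - ∑ r, (ℓ r : ℤ) * (Jcard H r : ℤ)

/-- The set of bandwidths of all configurations in
`H(R) = ⋃_{R_L, ℓ} H(R, R_L, ℓ)`. -/
def bandSet (F : Type*) [Field F] (N R : ℕ) : Set ℤ :=
  {b | ∃ (RL : ℕ) (ℓ : Fin R → ℕ)
        (H : Fin R → Fin N → Matrix (Fin 2) (Fin 2) F),
      RL ≤ R ∧ (∀ r, 1 ≤ ℓ r) ∧ (∑ r, ℓ r) = N ∧ memH N R RL ℓ H ∧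
      b = BH N ℓ H}

/-!
Call the rows `r < R_L` and the rows `r ≥ R_L` the two groups. A block of `𝓛 ∪ 𝓡` is singular,
so the `ℓ_r` invertible blocks of row `r` lie outside `J_r` and `|J_r| ≤ N - ℓ_r`; by (ii) and
(iii) two rows of one group share at most one column of `𝓛 ∪ 𝓡` blocks, so
`|J_r| + |J_s| ≤ N + 1`. Comparing every row of a group with its row `a` of largest
`j = |J_a|`, a group of total weight `m` contributes at most `ℓ_a j + (m - ℓ_a) min(j, N + 1 - j)`
to `Σ ℓ_r |J_r|`. A quadratic estimate bounds this by `p(q + 1) + q(N - q)` for the balanced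
split `p + q = m` when the group has several rows, and by `m(N - m)` when it has one; the
contributions of the two groups then add up to at most the quantity subtracted from `2N(N - 1)`
in one of the expressions defining `Δ₃` and `Δ₄`.
-/

lemma Finset.exists_sum_mul_le_of_pairwise_add_le {ι : Type*} {G : Finset ι} (hG : G.Nonempty)
    (w v : ι → ℕ) {c : ℕ} (hpair : ∀ r ∈ G, ∀ s ∈ G, r ≠ s → v r + v s ≤ c) :
    ∃ a ∈ G, ∑ r ∈ G, w r * v r ≤
      w a * v a + (∑ r ∈ G.erase a, w r) * min (v a) (c - v a) := by
  obtain ⟨a, ha, hmax⟩ := G.exists_max_image v hG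
  refine ⟨a, ha, ?_⟩
  rw [← Finset.add_sum_erase _ _ ha, Finset.sum_mul]
  gcongr with r hr
  have := hpair r (Finset.mem_of_mem_erase hr) a ha (Finset.ne_of_mem_erase hr)
  have := hmax r (Finset.mem_of_mem_erase hr)
  omega

-- `S` is dominated by one row of weight `x` meeting `j` columns together with rows of total
-- weight `y` meeting `u` columns each.
def TwoRowBound (N m S : ℤ) : Prop :=
  ∃ x y j u : ℤ, 1 ≤ x ∧ 0 ≤ y ∧ x + y = m ∧ 0 ≤ j ∧ j + x ≤ N ∧
    0 ≤ u ∧ u ≤ j ∧ u + j ≤ N + 1 ∧ S ≤ x * j + y * u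

lemma sum_eq_zero_or_twoRowBound {ι : Type*} (G : Finset ι) (ℓ J : ι → ℕ) {N : ℕ}
    (hpos : ∀ r ∈ G, 1 ≤ ℓ r) (hJ : ∀ r ∈ G, J r + ℓ r ≤ N)
    (hpair : ∀ r ∈ G, ∀ s ∈ G, r ≠ s → J r + J s ≤ N + 1) :
    ((∑ r ∈ G, ℓ r : ℕ) = (0 : ℤ) ∧ (∑ r ∈ G, ℓ r * J r : ℕ) = (0 : ℤ)) ∨
      TwoRowBound N (∑ r ∈ G, ℓ r : ℕ) (∑ r ∈ G, ℓ r * J r : ℕ) := by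
  rcases G.eq_empty_or_nonempty with rfl | hG
  · simp
  right
  obtain ⟨a, ha, hle⟩ := Finset.exists_sum_mul_le_of_pairwise_add_le hG ℓ J hpair
  have hJa := hJ a ha
  refine ⟨ℓ a, (∑ r ∈ G.erase a, ℓ r : ℕ), J a, (min (J a) (N + 1 - J a) : ℕ),
    by exact_mod_cast hpos a ha, by positivity, ?_, by positivity, by exact_mod_cast hJa,
    by positivity, by exact_mod_cast min_le_left _ _, by omega, by exact_mod_cast hle⟩
  rw [← Finset.add_sum_erase _ _ ha]
  push_cast
  ring

lemma Fin.card_filter_le_val_lt {N a b : ℕ} (hb : b ≤ N) :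
    (Finset.univ.filter (fun i : Fin N => a ≤ (i : ℕ) ∧ (i : ℕ) < b)).card = b - a := by
  have : Finset.univ.filter (fun i : Fin N => a ≤ (i : ℕ) ∧ (i : ℕ) < b) =
      (Finset.Ico a b).attachFin (fun m hm => (Finset.mem_Ico.1 hm).2.trans_le hb) := by
    ext i
    simp [Finset.mem_attachFin]
  rw [this, Finset.card_attachFin, Nat.card_Ico]

lemma psum_succ {R : ℕ} (ℓ : Fin R → ℕ) (r : Fin R) :
    psum ℓ (r + 1) = psum ℓ r + ℓ r := by
  have : Finset.univ.filter (fun k : Fin R => (k : ℕ) < r + 1) =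
      insert r (Finset.univ.filter (fun k : Fin R => (k : ℕ) < r)) := by
    ext k
    simp only [Finset.mem_filter, Finset.mem_univ, true_and, Finset.mem_insert, Fin.ext_iff]
    omega
  rw [psum, this, Finset.sum_insert (by simp), add_comm, psum]

lemma psum_le_sum {R : ℕ} (ℓ : Fin R → ℕ) (m : ℕ) : psum ℓ m ≤ ∑ r, ℓ r :=
  Finset.sum_le_sum_of_subset (Finset.filter_subset _ _)

lemma not_isUnit_of_matL_or_matR {F : Type*} [Field F] {B : Matrix (Fin 2) (Fin 2) F}
    (h : matL B ∨ matR B) : ¬ IsUnit B := by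
  rw [Matrix.isUnit_iff_isUnit_det, Matrix.det_fin_two, isUnit_iff_ne_zero, not_not]
  rcases h with ⟨h, -⟩ | ⟨h, -⟩ <;> simp [h]

section memH

variable {F : Type*} [Field F] {N R RL : ℕ} {ℓ : Fin R → ℕ}
  {H : Fin R → Fin N → Matrix (Fin 2) (Fin 2) F}

lemma Jcard_add_le (hmem : memH N R RL ℓ H) (hsum : ∑ r, ℓ r = N) (r : Fin R) :
    Jcard H r + ℓ r ≤ N := by
  set D := Finset.univ.filter (fun i : Fin N => psum ℓ r ≤ i ∧ i < psum ℓ (r + 1))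
  have hD : D.card = ℓ r := by
    rw [Fin.card_filter_le_val_lt (hsum ▸ psum_le_sum ℓ _), psum_succ]
    omega
  have hdisj : Disjoint (Finset.univ.filter (fun j => matL (H r j) ∨ matR (H r j))) D := by
    refine Finset.disjoint_filter.2 fun i _ hi hiD => not_isUnit_of_matL_or_matR hi ?_
    exact hmem.1 r i hiD.1 hiD.2
  rw [Jcard, ← hD, ← Finset.card_union_of_disjoint hdisj]
  exact (Finset.card_le_univ _).trans_eq (Fintype.card_fin N)

lemma Jcard_add_Jcard_le (hmem : memH N R RL ℓ H) {r s : Fin R} (hrs : r ≠ s)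
    (hgroup : (r : ℕ) < RL ↔ (s : ℕ) < RL) : Jcard H r + Jcard H s ≤ N + 1 := by
  set Jr := Finset.univ.filter (fun j => matL (H r j) ∨ matR (H r j))
  set Js := Finset.univ.filter (fun j => matL (H s j) ∨ matR (H s j))
  have hinter : (Jr ∩ Js).card ≤ 1 := by
    refine Finset.card_le_one.2 fun i hi j hj => by_contra fun hij => ?_
    simp only [Jr, Js, Finset.mem_inter, Finset.mem_filter, Finset.mem_univ, true_and] at hi hj
    by_cases hr : (r : ℕ) < RL
    · have hs := hgroup.1 hr
      exact hmem.2.2.2.1 ⟨r, s, i, j, hrs, hij, hr, hs, hmem.2.1 r i hr hi.1,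
        hmem.2.1 s i hs hi.2, hmem.2.1 r j hr hj.1, hmem.2.1 s j hs hj.2⟩
    · have hs := mt hgroup.2 hr
      rw [not_lt] at hr hs
      exact hmem.2.2.2.2 ⟨r, s, i, j, hrs, hij, hr, hs, hmem.2.2.1 r i hr hi.1,
        hmem.2.2.1 s i hs hi.2, hmem.2.2.1 r j hr hj.1, hmem.2.2.1 s j hs hj.2⟩
  have hunion : (Jr ∪ Js).card ≤ N := (Finset.card_le_univ _).trans_eq (Fintype.card_fin N)
  have := Finset.card_union_add_card_inter Jr Js
  change Jr.card + Js.card ≤ N + 1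
  omega

lemma sum_eq_zero_or_twoRowBound_of_memH (hmem : memH N R RL ℓ H) (hsum : ∑ r, ℓ r = N)
    (hpos : ∀ r, 1 ≤ ℓ r) (G : Finset (Fin R))
    (hG : ∀ r ∈ G, ∀ s ∈ G, ((r : ℕ) < RL ↔ (s : ℕ) < RL)) :
    ((∑ r ∈ G, ℓ r : ℕ) = (0 : ℤ) ∧ (∑ r ∈ G, ℓ r * Jcard H r : ℕ) = (0 : ℤ)) ∨
      TwoRowBound N (∑ r ∈ G, ℓ r : ℕ) (∑ r ∈ G, ℓ r * Jcard H r : ℕ) :=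
  sum_eq_zero_or_twoRowBound G ℓ (Jcard H) (fun r _ => hpos r)
    (fun r _ => Jcard_add_le hmem hsum r)
    (fun r hr s hs hrs => Jcard_add_Jcard_le hmem hrs (hG r hr s hs))

end memH

-- `2N(N-1) - pairBound N l₁ l₂ - pairBound N l₃ l₄` is the expression defining `Δ₄`, and
-- `2N(N-1) - pairBound N l₁ l₂ - l₃(N - l₃)` the one defining `Δ₃` when `l₁ + l₂ + l₃ = N`.
def pairBound (N p q : ℤ) : ℤ := p * (q + 1) + q * (N - q)

def RowGroupBound (N m S : ℤ) : Prop :=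
  S ≤ m * (N - m) ∨ ∃ p q : ℤ, 1 ≤ p ∧ p ≤ q ∧ p + q = m ∧ S ≤ pairBound N p q

section TwoRow

variable {N x y j u : ℤ}

lemma mul_add_mul_le_pairBound_of_le (hy : 0 ≤ y) (hyx : y ≤ x) (hjx : j + x ≤ N)
    (huj : u + j ≤ N + 1) :
    x * j + y * u ≤ pairBound N y x := by
  unfold pairBound
  nlinarith [mul_nonneg (sub_nonneg.2 hyx) (by linarith : (0:ℤ) ≤ N - x - j),
    mul_nonneg hy (by linarith : (0:ℤ) ≤ N + 1 - j - u)]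

lemma mul_add_mul_le_pairBound_even {p : ℤ} (hx : 1 ≤ x) (hxy : x < y) (hm : x + y = 2 * p)
    (hu : 0 ≤ u) (huj : u ≤ j) (hujN : u + j ≤ N + 1) :
    x * j + y * u ≤ pairBound N p p := by
  unfold pairBound
  rcases le_or_gt (2 * j) (N + 1) with h | h
  · nlinarith [mul_nonneg (by linarith : (0:ℤ) ≤ y) (by linarith : (0:ℤ) ≤ j - u),
      mul_nonneg (by linarith : (0:ℤ) ≤ p) (by linarith : (0:ℤ) ≤ N + 1 - 2 * j)]
  · nlinarith [mul_nonneg (by linarith : (0:ℤ) ≤ y) (by linarith : (0:ℤ) ≤ N + 1 - j - u),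
      mul_nonneg (by linarith : (0:ℤ) ≤ y - x) (by linarith : (0:ℤ) ≤ 2 * j - (N + 1))]

lemma mul_add_mul_le_pairBound_odd {p : ℤ} (hx : 1 ≤ x) (hxy : x < y)
    (hm : x + y = 2 * p + 1) (hmN : x + y < N) (hjx : j + x ≤ N)
    (huj : u ≤ j) (hujN : u + j ≤ N + 1) :
    x * j + y * u ≤ pairBound N p (p + 1) := by
  unfold pairBound
  rcases le_or_gt (2 * j) N with h | h
  · nlinarith [mul_nonneg (by linarith : (0:ℤ) ≤ y) (by linarith : (0:ℤ) ≤ j - u),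
      mul_nonneg (by linarith : (0:ℤ) ≤ 2 * p + 1) (by linarith : (0:ℤ) ≤ N - 2 * j)]
  rcases eq_or_lt_of_le (show N + 1 ≤ 2 * j by linarith) with h2 | h2
  · nlinarith [mul_nonneg (by linarith : (0:ℤ) ≤ y) (by linarith : (0:ℤ) ≤ j - u)]
  · have hxj : 0 ≤ N - x - j := by linarith
    nlinarith [mul_nonneg (by linarith : (0:ℤ) ≤ y) (by linarith : (0:ℤ) ≤ N + 1 - j - u),
      mul_nonneg (by linarith : (0:ℤ) ≤ 2 * p + 1 - 2 * x) hxj,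
      mul_nonneg (by linarith : (0:ℤ) ≤ p - x) (by linarith : (0:ℤ) ≤ N - 2 * x)]

lemma mul_add_mul_le_pairBound_one_half {k : ℤ} (hy : 0 ≤ y) (hm : x + y = N)
    (hk : N = 2 * k ∨ N = 2 * k + 1) (hjx : j + x ≤ N) (hu : 0 ≤ u) (huj : u ≤ j)
    (hujN : u + j ≤ N + 1) :
    x * j + y * u ≤ pairBound N 1 k + (N - 1 - k) * (N - (N - 1 - k)) := by
  unfold pairBound
  rcases le_or_gt (2 * j) N with h | h
  · rcases hk with hk | hk <;>
    nlinarith [mul_nonneg hy (by linarith : (0:ℤ) ≤ j - u),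
      mul_nonneg (by linarith : (0:ℤ) ≤ N) (by omega : (0:ℤ) ≤ k - j)]
  rcases eq_or_lt_of_le (show N + 1 ≤ 2 * j by linarith) with h2 | h2
  · rcases hk with hk | hk
    · omega
    · nlinarith [mul_nonneg hy (by linarith : (0:ℤ) ≤ j - u)]
  · rcases hk with hk | hk
    · have hjk : k + 1 ≤ j := by omega
      nlinarith [mul_nonneg hy (by linarith : (0:ℤ) ≤ N + 1 - j - u),
        mul_nonneg (by linarith : (0:ℤ) ≤ y - j) (by linarith : (0:ℤ) ≤ 2 * j - N - 1),
        mul_nonneg (by linarith : (0:ℤ) ≤ j - (k + 1)) (by linarith : (0:ℤ) ≤ 2 * j - 2 * k + 1)]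
    · have hjk : k + 2 ≤ j := by omega
      nlinarith [mul_nonneg hy (by linarith : (0:ℤ) ≤ N + 1 - j - u),
        mul_nonneg (by linarith : (0:ℤ) ≤ y - j) (by linarith : (0:ℤ) ≤ 2 * j - N - 1),
        mul_nonneg (by linarith : (0:ℤ) ≤ j - (k + 2)) (by linarith : (0:ℤ) ≤ 2 * j - 2 * k - 1)]

end TwoRow

namespace TwoRowBound

variable {N m S : ℤ}

lemma one_le (h : TwoRowBound N m S) : 1 ≤ m := by
  obtain ⟨x, y, -, -, hx, hy, rfl, -⟩ := h
  linarith

lemma rowGroupBound (h : TwoRowBound N m S) (hmN : m < N) : RowGroupBound N m S := by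
  obtain ⟨x, y, j, u, hx, hy, rfl, -, hjx, hu, huj, hujN, hS⟩ := h
  rcases hy.eq_or_lt with rfl | hy
  · left
    nlinarith [mul_nonneg (by linarith : (0:ℤ) ≤ x) (by linarith : (0:ℤ) ≤ N - x - j)]
  right
  rcases le_or_gt y x with hyx | hxy
  · exact ⟨y, x, hy, hyx, add_comm y x,
      hS.trans (mul_add_mul_le_pairBound_of_le hy.le hyx hjx hujN)⟩
  obtain ⟨p, hp⟩ | ⟨p, hp⟩ := Int.even_or_odd (x + y)
  · exact ⟨p, p, by linarith, le_rfl, by linarith,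
      hS.trans (mul_add_mul_le_pairBound_even hx hxy (by linarith) hu huj hujN)⟩
  · exact ⟨p, p + 1, by linarith, by linarith, by linarith,
      hS.trans (mul_add_mul_le_pairBound_odd hx hxy hp hmN hjx huj hujN)⟩

lemma le_pairBound_one_half (h : TwoRowBound N N S) {k : ℤ} (hk : N = 2 * k ∨ N = 2 * k + 1) :
    S ≤ pairBound N 1 k + (N - 1 - k) * (N - (N - 1 - k)) := by
  obtain ⟨x, y, j, u, -, hy, hm, -, hjx, hu, huj, hujN, hS⟩ := h
  exact hS.trans (mul_add_mul_le_pairBound_one_half hy hm hk hjx hu huj hujN)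

end TwoRowBound

def delta3Set (N : ℕ) : Set ℤ :=
  {d : ℤ | ∃ l₁ l₂ l₃ : ℕ, 1 ≤ l₁ ∧ 1 ≤ l₂ ∧ 1 ≤ l₃ ∧
    l₁ + l₂ + l₃ = N ∧ l₁ ≤ l₂ ∧
    d = 2 * (N : ℤ) * ((N : ℤ) - 1) - (N : ℤ) ^ 2 + (l₁ : ℤ) ^ 2
      + (l₂ : ℤ) ^ 2 + (l₃ : ℤ) ^ 2 + (l₁ : ℤ) * ((l₃ : ℤ) - 1)}

def delta4Set (N : ℕ) : Set ℤ :=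
  {d : ℤ | ∃ l₁ l₂ l₃ l₄ : ℕ, 1 ≤ l₁ ∧ 1 ≤ l₂ ∧ 1 ≤ l₃ ∧ 1 ≤ l₄ ∧
    l₁ + l₂ + l₃ + l₄ = N ∧ l₁ ≤ l₂ ∧ l₃ ≤ l₄ ∧
    d = 2 * (N : ℤ) * ((N : ℤ) - 1) - (l₁ : ℤ) * ((l₂ : ℤ) + 1)
      - (l₂ : ℤ) * ((N : ℤ) - (l₂ : ℤ)) - (l₃ : ℤ) * ((l₄ : ℤ) + 1)
      - (l₄ : ℤ) * ((N : ℤ) - (l₄ : ℤ))}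

section Delta

variable {N : ℕ} {Δ₃ Δ₄ S : ℤ}

lemma delta3_le (hΔ : Δ₃ ∈ lowerBounds (delta3Set N)) {l₁ l₂ l₃ : ℤ} (h₁ : 1 ≤ l₁)
    (h₃ : 1 ≤ l₃) (hsum : l₁ + l₂ + l₃ = N) (h₁₂ : l₁ ≤ l₂)
    (hS : S ≤ pairBound N l₁ l₂ + l₃ * (N - l₃)) :
    Δ₃ ≤ 2 * N * (N - 1) - S := by
  lift l₁ to ℕ using by omega
  lift l₂ to ℕ using by omega
  lift l₃ to ℕ using by omega
  have hd := hΔ ⟨l₁, l₂, l₃, by omega, by omega, by omega, by omega, by omega, rfl⟩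
  rw [← hsum] at hd hS ⊢
  unfold pairBound at hS
  linarith

lemma delta4_le (hΔ : Δ₄ ∈ lowerBounds (delta4Set N)) {l₁ l₂ l₃ l₄ : ℤ} (h₁ : 1 ≤ l₁)
    (h₃ : 1 ≤ l₃) (hsum : l₁ + l₂ + l₃ + l₄ = N)
    (h₁₂ : l₁ ≤ l₂) (h₃₄ : l₃ ≤ l₄) (hS : S ≤ pairBound N l₁ l₂ + pairBound N l₃ l₄) :
    Δ₄ ≤ 2 * N * (N - 1) - S := by
  lift l₁ to ℕ using by omega
  lift l₂ to ℕ using by omega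
  lift l₃ to ℕ using by omega
  lift l₄ to ℕ using by omega
  have hd := hΔ ⟨l₁, l₂, l₃, l₄, by omega, by omega, by omega, by omega, by omega, by omega,
    by omega, rfl⟩
  unfold pairBound at hS
  linarith

lemma delta3_le_of_twoRowBound (hN : 3 ≤ N) (h₃ : Δ₃ ∈ lowerBounds (delta3Set N))
    (h : TwoRowBound N N S) : Δ₃ ≤ 2 * N * (N - 1) - S := by
  obtain ⟨k, hk⟩ : ∃ k : ℤ, (N : ℤ) = 2 * k ∨ (N : ℤ) = 2 * k + 1 :=
    ⟨N / 2, by omega⟩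
  exact delta3_le (l₂ := k) (l₃ := N - 1 - k) h₃ le_rfl (by omega) (by ring)
    (by omega) (h.le_pairBound_one_half hk)

end Delta

section Combine

variable {N : ℕ} {Δ₃ Δ₄ : ℤ}

lemma min_delta_le_of_rowGroupBound (h₃ : Δ₃ ∈ lowerBounds (delta3Set N))
    (h₄ : Δ₄ ∈ lowerBounds (delta4Set N)) {mA mB SA SB : ℤ}
    (hA : RowGroupBound N mA SA) (hB : RowGroupBound N mB SB) (hA₁ : 1 ≤ mA) (hB₁ : 1 ≤ mB)
    (hN : 3 ≤ N) (hm : mA + mB = N) : min Δ₃ Δ₄ ≤ 2 * N * (N - 1) - (SA + SB) := by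
  rcases hA with hA | ⟨pA, qA, hpA, hpqA, rfl, hA⟩ <;>
    rcases hB with hB | ⟨pB, qB, hpB, hpqB, rfl, hB⟩
  · refine (min_le_left _ _).trans ?_
    rcases le_total mA mB with h | h
    · exact delta3_le (l₂ := mB - 1) (l₃ := mA) h₃ le_rfl hA₁ (by omega) (by omega)
        (by unfold pairBound; nlinarith)
    · exact delta3_le (l₂ := mA - 1) (l₃ := mB) h₃ le_rfl hB₁ (by omega) (by omega)
        (by unfold pairBound; nlinarith)
  · exact (min_le_left _ _).trans
      (delta3_le h₃ hpB hA₁ (by omega) hpqB (by linarith))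
  · exact (min_le_left _ _).trans
      (delta3_le h₃ hpA hB₁ (by omega) hpqA (by linarith))
  · exact (min_le_right _ _).trans
      (delta4_le h₄ hpA hpB (by rw [← hm]; ring) hpqA hpqB (by linarith))

lemma min_delta_le (h₃ : Δ₃ ∈ lowerBounds (delta3Set N))
    (h₄ : Δ₄ ∈ lowerBounds (delta4Set N)) {mA mB SA SB : ℤ}
    (hA : (mA = 0 ∧ SA = 0) ∨ TwoRowBound N mA SA)
    (hB : (mB = 0 ∧ SB = 0) ∨ TwoRowBound N mB SB)
    (hN : 3 ≤ N) (hm : mA + mB = N) : min Δ₃ Δ₄ ≤ 2 * N * (N - 1) - (SA + SB) := by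
  rcases hA with ⟨rfl, rfl⟩ | hA <;> rcases hB with ⟨rfl, rfl⟩ | hB
  · omega
  · rw [zero_add] at hm ⊢
    exact (min_le_left _ _).trans (delta3_le_of_twoRowBound hN h₃ (hm ▸ hB))
  · rw [add_zero] at hm ⊢
    exact (min_le_left _ _).trans (delta3_le_of_twoRowBound hN h₃ (hm ▸ hA))
  · exact min_delta_le_of_rowGroupBound h₃ h₄
      (hA.rowGroupBound (by linarith [hB.one_le])) (hB.rowGroupBound (by linarith [hA.one_le]))
      hA.one_le hB.one_le hN hm

end Combine

theorem statement19_general (F : Type*) [Field F] (N : ℕ) (hN : 4 ≤ N)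
    (Δ₃ Δ₄ : ℤ)
    (h₃ : IsLeast
      {d : ℤ | ∃ l₁ l₂ l₃ : ℕ, 1 ≤ l₁ ∧ 1 ≤ l₂ ∧ 1 ≤ l₃ ∧
        l₁ + l₂ + l₃ = N ∧ l₁ ≤ l₂ ∧
        d = 2 * (N : ℤ) * ((N : ℤ) - 1) - (N : ℤ) ^ 2 + (l₁ : ℤ) ^ 2
          + (l₂ : ℤ) ^ 2 + (l₃ : ℤ) ^ 2 + (l₁ : ℤ) * ((l₃ : ℤ) - 1)} Δ₃)
    (h₄ : IsLeast
      {d : ℤ | ∃ l₁ l₂ l₃ l₄ : ℕ, 1 ≤ l₁ ∧ 1 ≤ l₂ ∧ 1 ≤ l₃ ∧ 1 ≤ l₄ ∧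
        l₁ + l₂ + l₃ + l₄ = N ∧ l₁ ≤ l₂ ∧ l₃ ≤ l₄ ∧
        d = 2 * (N : ℤ) * ((N : ℤ) - 1) - (l₁ : ℤ) * ((l₂ : ℤ) + 1)
          - (l₂ : ℤ) * ((N : ℤ) - (l₂ : ℤ)) - (l₃ : ℤ) * ((l₄ : ℤ) + 1)
          - (l₄ : ℤ) * ((N : ℤ) - (l₄ : ℤ))} Δ₄)
    (R : ℕ) :
    ∀ b ∈ bandSet F N R, min Δ₃ Δ₄ ≤ b := by
  rintro b ⟨RL, ℓ, H, -, hpos, hsum, hmem, rfl⟩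
  let below : Fin R → Prop := fun r => (r : ℕ) < RL
  have hgroup := sum_eq_zero_or_twoRowBound_of_memH hmem hsum hpos
  have hA := hgroup (Finset.univ.filter below) fun r hr s hs =>
    iff_of_true (Finset.mem_filter.1 hr).2 (Finset.mem_filter.1 hs).2
  have hB := hgroup (Finset.univ.filter (¬ below ·)) fun r hr s hs =>
    iff_of_false (Finset.mem_filter.1 hr).2 (Finset.mem_filter.1 hs).2
  have hm : ((∑ r ∈ Finset.univ.filter below, ℓ r : ℕ) : ℤ) +
      (∑ r ∈ Finset.univ.filter (¬ below ·), ℓ r : ℕ) = N := by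
    rw [← hsum, ← Finset.sum_filter_add_sum_filter_not Finset.univ below]
    push_cast
    rfl
  refine (min_delta_le h₃.2 h₄.2 hA hB (by omega) hm).trans_eq ?_
  rw [BH, ← Finset.sum_filter_add_sum_filter_not Finset.univ below]
  push_cast
  rfl

/-- for `N ≥ 4`, with `Δ₃` the minimum of
`2N(N-1) - N² + ℓ₁² + ℓ₂² + ℓ₃² + ℓ₁(ℓ₃-1)` over compositions of `N` into
three positive parts with `ℓ₁ ≤ ℓ₂`, and `Δ₄` the minimum of
`2N(N-1) - ℓ₁(ℓ₂+1) - ℓ₂(N-ℓ₂) - ℓ₃(ℓ₄+1) - ℓ₄(N-ℓ₄)` over compositions of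
`N` into four positive parts with `ℓ₁ ≤ ℓ₂` and `ℓ₃ ≤ ℓ₄`, one has
`B̄*(R) ≥ min{Δ₃, Δ₄}` for every `R ∈ {1, …, N}`. -/
theorem statement19 (F : Type*) [Field F] [Fintype F] (N : ℕ) (hN : 4 ≤ N)
    (Δ₃ Δ₄ : ℤ)
    (h₃ : IsLeast
      {d : ℤ | ∃ l₁ l₂ l₃ : ℕ, 1 ≤ l₁ ∧ 1 ≤ l₂ ∧ 1 ≤ l₃ ∧
        l₁ + l₂ + l₃ = N ∧ l₁ ≤ l₂ ∧
        d = 2 * (N : ℤ) * ((N : ℤ) - 1) - (N : ℤ) ^ 2 + (l₁ : ℤ) ^ 2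
          + (l₂ : ℤ) ^ 2 + (l₃ : ℤ) ^ 2 + (l₁ : ℤ) * ((l₃ : ℤ) - 1)} Δ₃)
    (h₄ : IsLeast
      {d : ℤ | ∃ l₁ l₂ l₃ l₄ : ℕ, 1 ≤ l₁ ∧ 1 ≤ l₂ ∧ 1 ≤ l₃ ∧ 1 ≤ l₄ ∧
        l₁ + l₂ + l₃ + l₄ = N ∧ l₁ ≤ l₂ ∧ l₃ ≤ l₄ ∧
        d = 2 * (N : ℤ) * ((N : ℤ) - 1) - (l₁ : ℤ) * ((l₂ : ℤ) + 1)
          - (l₂ : ℤ) * ((N : ℤ) - (l₂ : ℤ)) - (l₃ : ℤ) * ((l₄ : ℤ) + 1)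
          - (l₄ : ℤ) * ((N : ℤ) - (l₄ : ℤ))} Δ₄)
    (R : ℕ) (hR1 : 1 ≤ R) (hRN : R ≤ N) :
    ∀ b ∈ bandSet F N R, min Δ₃ Δ₄ ≤ b :=
  statement19_general F N hN Δ₃ Δ₄ h₃ h₄ R
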